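/- Let T be quasimonotone and write Ť = cone(T) ∪ (X × {0}). Then the following are equivalent: (i) T is AE-maximal quasimonotone; (ii) every quasimonotone S with Ť ⊆ Š satisfies Ť = Š; (iii) Ť is maximal quasimonotone; (iv) Ť = T^ν. -/

import Mathlib

open NormedSpace

variable {X : Type*} [NormedAddCommGroup X] [NormedSpace ℝ X]

/-- quasimonotone relation: (x,x*) ∼q (y,y*) iff min{⟨y−x,x*⟩, ⟨x−y,y*⟩} ≤ 0 -/
def qrel (p q : X × StrongDual ℝ X) : Prop :=
  min (p.2 (q.1 - p.1)) (q.2 (p.1 - q.1)) ≤ 0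

/-- quasimonotone polar -/
def qpolar (T : Set (X × StrongDual ℝ X)) : Set (X × StrongDual ℝ X) :=
  {p | ∀ q ∈ T, qrel p q}

/-- imagewise conic hull of an operator -/
def coneOp (T : Set (X × StrongDual ℝ X)) : Set (X × StrongDual ℝ X) :=
  {p | ∃ t : ℝ, 0 ≤ t ∧ ∃ v, (p.1, v) ∈ T ∧ p.2 = t • v}

def QuasiMono (T : Set (X × StrongDual ℝ X)) : Prop := ∀ p ∈ T, ∀ q ∈ T, qrel p q

def MaxQuasiMono (T : Set (X × StrongDual ℝ X)) : Prop :=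
  QuasiMono T ∧ ∀ S, QuasiMono S → T ⊆ S → S = T

def Vset (T : Set (X × StrongDual ℝ X)) (x : X) : Set X :=
  {y | ∃ y' : StrongDual ℝ X, (y, y') ∈ T ∧ 0 < y' (x - y)}

/-- the image T^ν(x) of the quasimonotone polar -/
def polarIm (T : Set (X × StrongDual ℝ X)) (x : X) : Set (StrongDual ℝ X) :=
  {x' | (x, x') ∈ qpolar T}

/-- normal cone of C at x (no convexity or membership assumed) -/
def normalCone (C : Set X) (x : X) : Set (StrongDual ℝ X) :=
  {x' | ∀ y ∈ C, x' (y - x) ≤ 0}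

def im (T : Set (X × StrongDual ℝ X)) (x : X) : Set (StrongDual ℝ X) := {v | (x, v) ∈ T}

/-- effective domain: T(u) nonempty and ≠ {0} -/
def edom (T : Set (X × StrongDual ℝ X)) : Set X :=
  {u | (im T u).Nonempty ∧ im T u ≠ {0}}

/-- conic hull of a set in the dual -/
def coneSet (A : Set (StrongDual ℝ X)) : Set (StrongDual ℝ X) :=
  {v | ∃ t : ℝ, 0 ≤ t ∧ ∃ a ∈ A, v = t • a}

def Eset (T : Set (X × StrongDual ℝ X)) : Set X := {x | Vset T x = ∅}

/-- solution set of the Minty variational inequality for S on K -/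
def Minty (S : Set (X × StrongDual ℝ X)) (K : Set X) : Set X :=
  {x ∈ K | ∀ q ∈ S, q.1 ∈ K → q.2 (x - q.1) ≤ 0}

def AEMaxQuasiMono (T : Set (X × StrongDual ℝ X)) : Prop :=
  QuasiMono T ∧ ∀ S, QuasiMono S → (∀ x ∈ edom T, im T x ⊆ coneSet (im S x)) →
    (∀ x ∈ edom T, coneSet (im T x) = coneSet (im S x)) ∧ edom T = edom S

/-!
Ť is read off imagewise: Ť(x) = cone T(x) for x ∈ edom T and Ť(x) = {0} otherwise, so an
inclusion or equality between Ť and Š is exactly the imagewise cone condition defining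
AE-maximality, which gives (i) ⇔ (ii). Since quasimonotone relatedness to a fixed pair survives
nonnegative scaling and holds for the zero functional, Ť is quasimonotone and has the same polar
as T. As a quasimonotone operator is maximal iff it equals its own polar, this gives
(iii) ⇔ (iv); and (ii) ⇔ (iii) because S ⊆ Š for every S.
-/

def coneOpWithZero (T : Set (X × StrongDual ℝ X)) : Set (X × StrongDual ℝ X) :=
  coneOp T ∪ Set.univ ×ˢ ({0} : Set (StrongDual ℝ X))

section

variable {T S : Set (X × StrongDual ℝ X)}

lemma qrel_comm {p q : X × StrongDual ℝ X} : qrel p q ↔ qrel q p := by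
  simp only [qrel, min_comm]

lemma qrel_self (p : X × StrongDual ℝ X) : qrel p p := by
  simp [qrel]

lemma qrel_zero_left (x : X) (q : X × StrongDual ℝ X) : qrel (x, 0) q := by
  simp [qrel]

lemma qrel_smul_left {x : X} {v : StrongDual ℝ X} {q : X × StrongDual ℝ X} {t : ℝ}
    (ht : 0 ≤ t) (h : qrel (x, v) q) : qrel (x, t • v) q := by
  rcases min_le_iff.1 h with h | h
  · exact min_le_iff.2 (Or.inl (by simpa using mul_nonpos_of_nonneg_of_nonpos ht h))
  · exact min_le_iff.2 (Or.inr h)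

lemma subset_qpolar_comm :
    T ⊆ qpolar S ↔ S ⊆ qpolar T :=
  ⟨fun h _ hq _ hp => qrel_comm.1 (h hp _ hq), fun h _ hp _ hq => qrel_comm.1 (h hq _ hp)⟩

lemma qpolar_anti (h : T ⊆ S) : qpolar S ⊆ qpolar T :=
  fun _ hp _ hq => hp _ (h hq)

lemma quasiMono_iff_subset_qpolar :
    QuasiMono T ↔ T ⊆ qpolar T :=
  Iff.rfl

lemma maxQuasiMono_iff_eq_qpolar {A : Set (X × StrongDual ℝ X)} (hA : QuasiMono A) :
    MaxQuasiMono A ↔ A = qpolar A := by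
  refine ⟨fun ⟨_, hmax⟩ => (quasiMono_iff_subset_qpolar.1 hA).antisymm fun p hp => ?_,
    fun hA_eq => ⟨hA, fun S hS hAS => ?_⟩⟩
  · have hins : QuasiMono (insert p A) := by
      rintro a (rfl | ha) b (rfl | hb)
      · exact qrel_self _
      · exact hp b hb
      · exact qrel_comm.1 (hp a ha)
      · exact hA a ha b hb
    exact hmax _ hins (Set.subset_insert p A) ▸ Set.mem_insert p A
  · refine Set.Subset.antisymm (fun p hp => ?_) hAS
    exact hA_eq ▸ qpolar_anti hAS (hS p hp)

lemma mem_edom_iff {x : X} : x ∈ edom T ↔ ∃ v ∈ im T x, v ≠ 0 := by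
  refine ⟨fun ⟨⟨v, hv⟩, hne⟩ => ?_,
    fun ⟨v, hv, hv0⟩ => ⟨⟨v, hv⟩, fun h => hv0 (by rwa [h] at hv)⟩⟩
  by_contra! h
  exact hne (Set.eq_singleton_iff_unique_mem.2 ⟨h v hv ▸ hv, h⟩)

lemma coneSet_subset_coneSet {A B : Set (StrongDual ℝ X)} (h : A ⊆ coneSet B) :
    coneSet A ⊆ coneSet B := by
  rintro _ ⟨t, ht, a, ha, rfl⟩
  obtain ⟨s, hs, b, hb, rfl⟩ := h ha
  exact ⟨t * s, mul_nonneg ht hs, b, hb, smul_smul t s b⟩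

lemma subset_coneOpWithZero : T ⊆ coneOpWithZero T :=
  fun p hp => Or.inl ⟨1, zero_le_one, p.2, hp, (one_smul ℝ p.2).symm⟩

lemma zero_mem_coneOpWithZero (x : X) : (x, 0) ∈ coneOpWithZero T :=
  Or.inr ⟨Set.mem_univ x, rfl⟩

lemma coneOpWithZero_subset_qpolar (h : T ⊆ qpolar S) : coneOpWithZero T ⊆ qpolar S := by
  rintro ⟨x, _⟩ (⟨t, ht, v, hv, rfl⟩ | ⟨-, rfl⟩) q hq
  · exact qrel_smul_left ht (h hv q hq)
  · exact qrel_zero_left x q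

lemma quasiMono_coneOpWithZero (hT : QuasiMono T) : QuasiMono (coneOpWithZero T) := by
  have hTT : T ⊆ qpolar (coneOpWithZero T) :=
    subset_qpolar_comm.1 (coneOpWithZero_subset_qpolar (quasiMono_iff_subset_qpolar.1 hT))
  exact quasiMono_iff_subset_qpolar.2 (coneOpWithZero_subset_qpolar hTT)

lemma qpolar_coneOpWithZero : qpolar (coneOpWithZero T) = qpolar T := by
  refine (qpolar_anti subset_coneOpWithZero).antisymm fun p hp => ?_
  have hTp : T ⊆ qpolar {p} := subset_qpolar_comm.1 (Set.singleton_subset_iff.2 hp)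
  exact Set.singleton_subset_iff.1 (subset_qpolar_comm.1 (coneOpWithZero_subset_qpolar hTp))

lemma im_coneOpWithZero_of_mem_edom {x : X} (hx : x ∈ edom T) :
    im (coneOpWithZero T) x = coneSet (im T x) := by
  obtain ⟨w, hw⟩ := hx.1
  ext v
  refine ⟨?_, Or.inl⟩
  rintro (hv | ⟨-, rfl⟩)
  · exact hv
  · exact ⟨0, le_rfl, w, hw, (zero_smul ℝ w).symm⟩

lemma im_coneOpWithZero_of_notMem_edom {x : X} (hx : x ∉ edom T) :
    im (coneOpWithZero T) x = {0} := by
  refine Set.eq_singleton_iff_unique_mem.2 ⟨zero_mem_coneOpWithZero x, ?_⟩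
  rintro _ (⟨t, -, v, hv, rfl⟩ | ⟨-, rfl⟩)
  · by_contra hne
    exact hx (mem_edom_iff.2 ⟨v, hv, fun h => hne (by simp [h])⟩)
  · rfl

lemma edom_coneOpWithZero : edom (coneOpWithZero T) = edom T := by
  ext x
  by_cases hx : x ∈ edom T
  · obtain ⟨v, hv, hv0⟩ := mem_edom_iff.1 hx
    exact iff_of_true (mem_edom_iff.2 ⟨v, subset_coneOpWithZero hv, hv0⟩) hx
  · refine iff_of_false (fun h => ?_) hx
    obtain ⟨v, hv, hv0⟩ := mem_edom_iff.1 h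
    exact hv0 (by rwa [im_coneOpWithZero_of_notMem_edom hx] at hv)

lemma coneOpWithZero_subset_iff :
    coneOpWithZero T ⊆ coneOpWithZero S ↔ ∀ x ∈ edom T, im T x ⊆ coneSet (im S x) := by
  constructor
  · intro h x hx
    have hxS : x ∈ edom S := by
      rw [← edom_coneOpWithZero (T := S)]
      obtain ⟨v, hv, hv0⟩ := mem_edom_iff.1 hx
      exact mem_edom_iff.2 ⟨v, h (subset_coneOpWithZero hv), hv0⟩
    rw [← im_coneOpWithZero_of_mem_edom hxS]
    exact fun v hv => h (subset_coneOpWithZero hv)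
  · rintro h ⟨x, v⟩ (hv : v ∈ im (coneOpWithZero T) x)
    by_cases hx : x ∈ edom T
    · have hcone : coneSet (im T x) ⊆ coneSet (im S x) := coneSet_subset_coneSet (h x hx)
      exact Or.inl (hcone (im_coneOpWithZero_of_mem_edom hx ▸ hv))
    · obtain rfl : v = 0 := by rwa [im_coneOpWithZero_of_notMem_edom hx] at hv
      exact zero_mem_coneOpWithZero x

lemma coneOpWithZero_eq_iff :
    coneOpWithZero T = coneOpWithZero S ↔
      (∀ x ∈ edom T, coneSet (im T x) = coneSet (im S x)) ∧ edom T = edom S := by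
  constructor
  · intro h
    have hedom : edom T = edom S := by
      rw [← edom_coneOpWithZero, h, edom_coneOpWithZero]
    refine ⟨fun x hx => ?_, hedom⟩
    rw [← im_coneOpWithZero_of_mem_edom hx, h,
      im_coneOpWithZero_of_mem_edom (hedom ▸ hx : x ∈ edom S)]
  · rintro ⟨hcone, hedom⟩
    suffices ∀ x, im (coneOpWithZero T) x = im (coneOpWithZero S) x by
      ext ⟨x, v⟩
      exact Set.ext_iff.1 (this x) v
    intro x
    by_cases hx : x ∈ edom T
    · rw [im_coneOpWithZero_of_mem_edom hx, hcone x hx,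
        im_coneOpWithZero_of_mem_edom (hedom ▸ hx : x ∈ edom S)]
    · rw [im_coneOpWithZero_of_notMem_edom hx,
        im_coneOpWithZero_of_notMem_edom (hedom ▸ hx : x ∉ edom S)]

lemma aeMaxQuasiMono_iff_coneOpWithZero (hT : QuasiMono T) :
    AEMaxQuasiMono T ↔ ∀ S, QuasiMono S →
      coneOpWithZero T ⊆ coneOpWithZero S → coneOpWithZero T = coneOpWithZero S := by
  simp only [AEMaxQuasiMono, hT, true_and, coneOpWithZero_subset_iff, coneOpWithZero_eq_iff]

lemma maxQuasiMono_coneOpWithZero_iff (hT : QuasiMono T) :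
    MaxQuasiMono (coneOpWithZero T) ↔ ∀ S, QuasiMono S →
      coneOpWithZero T ⊆ coneOpWithZero S → coneOpWithZero T = coneOpWithZero S := by
  refine ⟨fun ⟨_, hmax⟩ S hS hTS => (hmax _ (quasiMono_coneOpWithZero hS) hTS).symm,
    fun h => ⟨quasiMono_coneOpWithZero hT, fun S hS hTS => ?_⟩⟩
  have heq := h S hS (hTS.trans subset_coneOpWithZero)
  exact (subset_coneOpWithZero.trans heq.symm.subset).antisymm hTS

lemma maxQuasiMono_coneOpWithZero_iff_eq_qpolar (hT : QuasiMono T) :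
    MaxQuasiMono (coneOpWithZero T) ↔ coneOpWithZero T = qpolar T := by
  rw [maxQuasiMono_iff_eq_qpolar (quasiMono_coneOpWithZero hT), qpolar_coneOpWithZero]

end

theorem stmt16_general (T : Set (X × StrongDual ℝ X)) (hT : QuasiMono T) :
    (AEMaxQuasiMono T ↔
      ∀ S : Set (X × StrongDual ℝ X), QuasiMono S →
        coneOp T ∪ Set.univ ×ˢ ({0} : Set (StrongDual ℝ X)) ⊆
          coneOp S ∪ Set.univ ×ˢ ({0} : Set (StrongDual ℝ X)) →
        coneOp T ∪ Set.univ ×ˢ ({0} : Set (StrongDual ℝ X)) =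
          coneOp S ∪ Set.univ ×ˢ ({0} : Set (StrongDual ℝ X))) ∧
    (AEMaxQuasiMono T ↔
      MaxQuasiMono (coneOp T ∪ Set.univ ×ˢ ({0} : Set (StrongDual ℝ X)))) ∧
    (AEMaxQuasiMono T ↔
      coneOp T ∪ Set.univ ×ˢ ({0} : Set (StrongDual ℝ X)) = qpolar T) := by
  have hii : AEMaxQuasiMono T ↔ _ := aeMaxQuasiMono_iff_coneOpWithZero hT
  have hiii := hii.trans (maxQuasiMono_coneOpWithZero_iff hT).symm
  exact ⟨hii, hiii, hiii.trans (maxQuasiMono_coneOpWithZero_iff_eq_qpolar hT)⟩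

theorem stmt16 [CompleteSpace X] (T : Set (X × StrongDual ℝ X)) (hT : QuasiMono T) :
    (AEMaxQuasiMono T ↔
      ∀ S : Set (X × StrongDual ℝ X), QuasiMono S →
        coneOp T ∪ Set.univ ×ˢ ({0} : Set (StrongDual ℝ X)) ⊆
          coneOp S ∪ Set.univ ×ˢ ({0} : Set (StrongDual ℝ X)) →
        coneOp T ∪ Set.univ ×ˢ ({0} : Set (StrongDual ℝ X)) =
          coneOp S ∪ Set.univ ×ˢ ({0} : Set (StrongDual ℝ X))) ∧
    (AEMaxQuasiMono T ↔
      MaxQuasiMono (coneOp T ∪ Set.univ ×ˢ ({0} : Set (StrongDual ℝ X)))) ∧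
    (AEMaxQuasiMono T ↔
      coneOp T ∪ Set.univ ×ˢ ({0} : Set (StrongDual ℝ X)) = qpolar T) :=
  stmt16_general T hT
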